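/- Let d ≥ 1, 0 < ε < 1, let b ∈ ℝ^d be a nonzero constant vector, let u : ℝ^d → ℝ be twice continuously differentiable with compact support, and set f := −εΔu + ⟨b, ∇u⟩. Assume c_b ≤ exp(−⟨b,x⟩) ≤ C_b for all x in the support of u, with 0 < c_b ≤ C_b. Then (ε‖∇u‖_{L²}² + ‖u‖_{L²}²)^{1/2} ≤ [C_b / (c_b √(1−ε) ‖b‖)] · (c_b/C_b + 1/((1−ε)‖b‖²))^{1/2} · ‖f‖_{L²}. -/

import Mathlib

/-!
Testing the equation against `u` kills the convection term (`∫ u ∂_b u = 0`) and gives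
`ε ‖∇u‖² = ∫ u f`; testing it against `∂_b u` kills the diffusion term (`∫ Δu ∂_b u = 0` by the
symmetry of second derivatives) and gives `‖∂_b u‖ ≤ ‖f‖`. The bounds on `exp (-⟪b, x⟫)` confine
the support of `u` to the slab `-log C_b ≤ ⟪b, x⟫ ≤ -log c_b`; integrating `u²` by parts against
the affine function `⟪b, x⟫ - c` centred in the slab gives `‖b‖² ‖u‖ ≤ log (C_b / c_b) ‖∂_b u‖`.
As `log (C_b / c_b) < C_b / c_b`, this is `‖u‖ ≤ m ‖f‖` with `m = C_b / (c_b (1 - ε) ‖b‖²)`, hence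
`ε ‖∇u‖² ≤ m ‖f‖²`, and the square of the constant in the estimate is exactly `m + m²`.
-/

open MeasureTheory RealInnerProductSpace

/-- Laplacian of `u : ℝ^d → ℝ`, `Δu = Σᵢ ∂²u/∂xᵢ²`. -/
noncomputable def lap {d : ℕ} (u : EuclideanSpace ℝ (Fin d) → ℝ)
    (x : EuclideanSpace ℝ (Fin d)) : ℝ :=
  ∑ i, fderiv ℝ (fun y => fderiv ℝ u y (EuclideanSpace.single i 1)) x
    (EuclideanSpace.single i 1)

theorem integral_mul_le_of_integral_sq_le {α : Type*} [MeasurableSpace α] {μ : Measure α}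
    {g h : α → ℝ} (hg : MemLp g 2 μ) (hh : MemLp h 2 μ) {m : ℝ} (hm : 0 < m)
    (hgh : ∫ x, g x ^ 2 ∂μ ≤ m ^ 2 * ∫ x, h x ^ 2 ∂μ) :
    ∫ x, g x * h x ∂μ ≤ m * ∫ x, h x ^ 2 ∂μ := by
  have hmono : ∫ x, 2 * m * (g x * h x) ∂μ ≤ ∫ x, (g x ^ 2 + m ^ 2 * h x ^ 2) ∂μ :=
    integral_mono ((hg.integrable_mul hh).const_mul _)
      (hg.integrable_sq.add (hh.integrable_sq.const_mul _))
      fun x => by nlinarith [sq_nonneg (g x - m * h x)]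
  rw [integral_const_mul, integral_add hg.integrable_sq (hh.integrable_sq.const_mul _),
    integral_const_mul] at hmono
  nlinarith

section Calculus

variable {E F : Type*} [NormedAddCommGroup E] [NormedSpace ℝ E] [NormedAddCommGroup F]
  [NormedSpace ℝ F]

theorem ContDiff.fderiv_apply_right {u : E → F} (hu : ContDiff ℝ 2 u) (v : E) :
    ContDiff ℝ 1 fun x => fderiv ℝ u x v :=
  (hu.fderiv_right (m := 1) (by norm_num)).clm_apply contDiff_const

theorem fderiv_fderiv_apply_comm {u : E → F} (hu : ContDiff ℝ 2 u) (x v w : E) :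
    fderiv ℝ (fun y => fderiv ℝ u y v) x w = fderiv ℝ (fun y => fderiv ℝ u y w) x v := by
  have hdiff : DifferentiableAt ℝ (fderiv ℝ u) x :=
    ((hu.fderiv_right (m := 1) (by norm_num)).differentiable one_ne_zero).differentiableAt
  have hsecond : ∀ v', fderiv ℝ (fun y => fderiv ℝ u y v') x = (fderiv ℝ (fderiv ℝ u) x).flip v' :=
    fun v' => by simp [fderiv_clm_apply hdiff (differentiableAt_const v')]
  rw [hsecond, hsecond]
  exact (hu.contDiffAt.isSymmSndFDerivAt (by simp)).eq w v

end Calculus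

section IntegrationByParts

variable {E : Type*} [NormedAddCommGroup E] [NormedSpace ℝ E] [FiniteDimensional ℝ E]
  [MeasurableSpace E] [BorelSpace E] {μ : Measure E} [μ.IsAddHaarMeasure]

theorem integral_mul_fderiv_eq_neg_fderiv_mul_of_hasCompactSupport {φ ψ : E → ℝ}
    (hφ : ContDiff ℝ 1 φ) (hψ : ContDiff ℝ 1 ψ) (hφc : HasCompactSupport φ) (v : E) :
    ∫ x, φ x * fderiv ℝ ψ x v ∂μ = -∫ x, fderiv ℝ φ x v * ψ x ∂μ := by
  have hφ' : Continuous fun x => fderiv ℝ φ x v :=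
    (hφ.continuous_fderiv one_ne_zero).clm_apply continuous_const
  have hψ' : Continuous fun x => fderiv ℝ ψ x v :=
    (hψ.continuous_fderiv one_ne_zero).clm_apply continuous_const
  exact integral_mul_fderiv_eq_neg_fderiv_mul_of_integrable
    ((hφ'.mul hψ.continuous).integrable_of_hasCompactSupport (hφc.fderiv_apply ℝ v).mul_right)
    ((hφ.continuous.mul hψ').integrable_of_hasCompactSupport hφc.mul_right)
    ((hφ.continuous.mul hψ.continuous).integrable_of_hasCompactSupport hφc.mul_right)
    (fun x _ => (hφ.differentiable one_ne_zero).differentiableAt)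
    (fun x _ => (hψ.differentiable one_ne_zero).differentiableAt)

theorem integral_mul_fderiv_self_eq_zero {g : E → ℝ} (hg : ContDiff ℝ 1 g)
    (hgc : HasCompactSupport g) (v : E) : ∫ x, g x * fderiv ℝ g x v ∂μ = 0 := by
  have h := integral_mul_fderiv_eq_neg_fderiv_mul_of_hasCompactSupport (μ := μ) hg hg hgc v
  simp only [mul_comm (fderiv ℝ g _ v)] at h
  linarith

end IntegrationByParts

section Poincare

variable {E : Type*} [NormedAddCommGroup E] [InnerProductSpace ℝ E] [FiniteDimensional ℝ E]
  [MeasurableSpace E] [BorelSpace E] {μ : Measure E} [μ.IsAddHaarMeasure]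

theorem norm_sq_mul_integral_sq_eq {u : E → ℝ} (hu : ContDiff ℝ 1 u) (huc : HasCompactSupport u)
    (v : E) (c : ℝ) :
    ‖v‖ ^ 2 * ∫ x, u x ^ 2 ∂μ = -∫ x, 2 * u x * fderiv ℝ u x v * (⟪v, x⟫ - c) ∂μ := by
  have hχ : ContDiff ℝ 1 fun x => ⟪v, x⟫ - c := (innerSL ℝ v).contDiff.sub contDiff_const
  have hderiv_sq : ∀ x, fderiv ℝ (fun y => u y * u y) x v = 2 * u x * fderiv ℝ u x v := by
    intro x
    have hux := (hu.differentiable one_ne_zero).differentiableAt (x := x)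
    rw [fderiv_fun_mul hux hux]
    simp only [add_apply, smul_apply, smul_eq_mul]
    ring
  have hderiv_χ : ∀ x, fderiv ℝ (fun y => ⟪v, y⟫ - c) x v = ‖v‖ ^ 2 := by
    intro x
    have : HasFDerivAt (fun y => ⟪v, y⟫ - c) (innerSL ℝ v) x :=
      (innerSL ℝ v).hasFDerivAt.sub_const c
    rw [this.fderiv, innerSL_apply_apply, real_inner_self_eq_norm_sq]
  have hibp := integral_mul_fderiv_eq_neg_fderiv_mul_of_hasCompactSupport (μ := μ) (hu.mul hu) hχ
    huc.mul_right v
  simp only [hderiv_sq, hderiv_χ] at hibp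
  rw [← integral_const_mul, ← hibp]
  congr 1; ext x; ring

theorem norm_pow_four_mul_integral_sq_le_of_slab {u : E → ℝ} (hu : ContDiff ℝ 1 u)
    (huc : HasCompactSupport u) {v : E} {c h : ℝ} (hslab : ∀ x ∈ tsupport u, |⟪v, x⟫ - c| ≤ h) :
    ‖v‖ ^ 4 * ∫ x, u x ^ 2 ∂μ ≤ 4 * h ^ 2 * ∫ x, fderiv ℝ u x v ^ 2 ∂μ := by
  set w := fun x => fderiv ℝ u x v
  set χ := fun x => ⟪v, x⟫ - c
  have hw : Continuous w := (hu.continuous_fderiv one_ne_zero).clm_apply continuous_const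
  have hpt : ∀ x, ‖v‖ ^ 2 * -(2 * u x * w x * χ x) ≤
      ‖v‖ ^ 4 / 2 * u x ^ 2 + 2 * h ^ 2 * w x ^ 2 := by
    intro x
    by_cases hx : x ∈ tsupport u
    · have hχx : χ x ^ 2 ≤ h ^ 2 := sq_le_sq' (abs_le.mp (hslab x hx)).1 (abs_le.mp (hslab x hx)).2
      nlinarith [sq_nonneg (‖v‖ ^ 2 * u x + 2 * χ x * w x),
        mul_nonneg (sq_nonneg (w x)) (sub_nonneg.mpr hχx)]
    · simp [image_eq_zero_of_notMem_tsupport hx]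
      positivity
  have hu2 : Integrable (fun x => u x ^ 2) μ :=
    (hu.continuous.memLp_of_hasCompactSupport huc).integrable_sq
  have hw2 : Integrable (fun x => w x ^ 2) μ :=
    (hw.memLp_of_hasCompactSupport (huc.fderiv_apply ℝ v)).integrable_sq
  have huwχ : Integrable (fun x => ‖v‖ ^ 2 * -(2 * u x * w x * χ x)) μ := by
    have := hu.continuous
    refine Continuous.integrable_of_hasCompactSupport (by fun_prop) (huc.mono fun x hx => ?_)
    contrapose! hx
    simp [hx]
  have hmono : ∫ x, ‖v‖ ^ 2 * -(2 * u x * w x * χ x) ∂μ ≤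
      ∫ x, (‖v‖ ^ 4 / 2 * u x ^ 2 + 2 * h ^ 2 * w x ^ 2) ∂μ :=
    integral_mono huwχ ((hu2.const_mul _).add (hw2.const_mul _)) hpt
  rw [integral_const_mul, integral_neg, ← norm_sq_mul_integral_sq_eq hu huc v c,
    integral_add (hu2.const_mul _) (hw2.const_mul _), integral_const_mul,
    integral_const_mul] at hmono
  nlinarith

end Poincare

section Laplacian

variable {d : ℕ} {μ : Measure (EuclideanSpace ℝ (Fin d))} [μ.IsAddHaarMeasure]
  {u : EuclideanSpace ℝ (Fin d) → ℝ}

theorem ContDiff.continuous_lap (hu : ContDiff ℝ 2 u) : Continuous (lap u) :=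
  continuous_finsetSum _ fun _ _ =>
    ((hu.fderiv_apply_right _).continuous_fderiv one_ne_zero).clm_apply continuous_const

theorem HasCompactSupport.lap (huc : HasCompactSupport u) : HasCompactSupport (lap u) :=
  huc.mono' fun x hx => by
    obtain ⟨i, -, hi⟩ := Finset.exists_ne_zero_of_sum_ne_zero hx
    exact ((tsupport_fderiv_apply_subset ℝ _).trans (tsupport_fderiv_apply_subset ℝ _))
      (subset_tsupport _ hi)

theorem norm_gradient_sq_eq_sum (x : EuclideanSpace ℝ (Fin d)) :
    ‖gradient u x‖ ^ 2 = ∑ i, fderiv ℝ u x (EuclideanSpace.single i 1) ^ 2 := by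
  rw [EuclideanSpace.norm_sq_eq]
  refine Finset.sum_congr rfl fun i _ => ?_
  rw [← inner_gradient_left, EuclideanSpace.inner_single_right, Real.norm_eq_abs, sq_abs]
  simp

theorem integral_mul_lap {g : EuclideanSpace ℝ (Fin d) → ℝ} (hg : ContDiff ℝ 1 g)
    (hgc : HasCompactSupport g) (hu : ContDiff ℝ 2 u) :
    ∫ x, g x * lap u x ∂μ = -∑ i, ∫ x, fderiv ℝ g x (EuclideanSpace.single i 1) *
      fderiv ℝ u x (EuclideanSpace.single i 1) ∂μ := by
  have hint : ∀ i, Integrable (fun x => g x * fderiv ℝ (fun y => fderiv ℝ u y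
      (EuclideanSpace.single i 1)) x (EuclideanSpace.single i 1)) μ := fun i =>
    (hg.continuous.mul (((hu.fderiv_apply_right _).continuous_fderiv one_ne_zero).clm_apply
      continuous_const)).integrable_of_hasCompactSupport hgc.mul_right
  simp only [lap, Finset.mul_sum]
  rw [integral_finsetSum _ fun i _ => hint i, ← Finset.sum_neg_distrib]
  exact Finset.sum_congr rfl fun i _ =>
    integral_mul_fderiv_eq_neg_fderiv_mul_of_hasCompactSupport hg (hu.fderiv_apply_right _) hgc _

theorem integral_mul_lap_self (hu : ContDiff ℝ 2 u) (huc : HasCompactSupport u) :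
    ∫ x, u x * lap u x ∂μ = -∫ x, ‖gradient u x‖ ^ 2 ∂μ := by
  rw [integral_mul_lap (hu.of_le one_le_two) huc hu]
  simp only [norm_gradient_sq_eq_sum, ← sq]
  rw [integral_finsetSum _ fun i _ =>
    ((hu.fderiv_apply_right _).continuous.memLp_of_hasCompactSupport
      (huc.fderiv_apply ℝ _)).integrable_sq]

theorem integral_lap_mul_fderiv_eq_zero (hu : ContDiff ℝ 2 u) (huc : HasCompactSupport u)
    (v : EuclideanSpace ℝ (Fin d)) : ∫ x, lap u x * fderiv ℝ u x v ∂μ = 0 := by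
  simp only [mul_comm (lap u _)]
  rw [integral_mul_lap (hu.fderiv_apply_right v) (huc.fderiv_apply ℝ v) hu, neg_eq_zero]
  refine Finset.sum_eq_zero fun i _ => ?_
  simp only [fderiv_fderiv_apply_comm hu _ v, mul_comm (fderiv ℝ _ _ v)]
  exact integral_mul_fderiv_self_eq_zero (hu.fderiv_apply_right _) (huc.fderiv_apply ℝ _) v

end Laplacian

section ConvectionDiffusion

variable {d : ℕ} {μ : Measure (EuclideanSpace ℝ (Fin d))} [μ.IsAddHaarMeasure]
  {u : EuclideanSpace ℝ (Fin d) → ℝ} {ε : ℝ} {b : EuclideanSpace ℝ (Fin d)}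

noncomputable def convectionDiffusion (ε : ℝ) (b : EuclideanSpace ℝ (Fin d))
    (u : EuclideanSpace ℝ (Fin d) → ℝ) (x : EuclideanSpace ℝ (Fin d)) : ℝ :=
  -ε * lap u x + ⟪b, gradient u x⟫

theorem convectionDiffusion_apply (x : EuclideanSpace ℝ (Fin d)) :
    convectionDiffusion ε b u x = -ε * lap u x + fderiv ℝ u x b := by
  simp [convectionDiffusion, inner_gradient_right]

theorem ContDiff.continuous_convectionDiffusion (hu : ContDiff ℝ 2 u) :
    Continuous (convectionDiffusion ε b u) := by
  simp only [funext convectionDiffusion_apply]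
  exact (continuous_const.mul hu.continuous_lap).add (hu.fderiv_apply_right b).continuous

theorem HasCompactSupport.convectionDiffusion (huc : HasCompactSupport u) :
    HasCompactSupport (convectionDiffusion ε b u) := by
  simp only [funext convectionDiffusion_apply]
  exact (huc.lap.mul_left (f := fun _ => -ε)).add (huc.fderiv_apply ℝ b)

variable (ε b) in
theorem integral_mul_convectionDiffusion_self (hu : ContDiff ℝ 2 u) (huc : HasCompactSupport u) :
    ∫ x, u x * convectionDiffusion ε b u x ∂μ = ε * ∫ x, ‖gradient u x‖ ^ 2 ∂μ := by
  have hulap : Integrable (fun x => u x * lap u x) μ :=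
    (hu.continuous.mul hu.continuous_lap).integrable_of_hasCompactSupport huc.mul_right
  have hudu : Integrable (fun x => u x * fderiv ℝ u x b) μ :=
    (hu.continuous.mul (hu.fderiv_apply_right b).continuous).integrable_of_hasCompactSupport
      huc.mul_right
  simp only [convectionDiffusion_apply, mul_add, mul_left_comm (u _)]
  rw [integral_add (hulap.const_mul _) hudu, integral_const_mul, integral_mul_lap_self hu huc,
    integral_mul_fderiv_self_eq_zero (hu.of_le one_le_two) huc b]
  ring

variable (ε b) in
theorem integral_fderiv_sq_le_integral_convectionDiffusion_sq (hu : ContDiff ℝ 2 u)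
    (huc : HasCompactSupport u) :
    ∫ x, fderiv ℝ u x b ^ 2 ∂μ ≤ ∫ x, convectionDiffusion ε b u x ^ 2 ∂μ := by
  have hdu : MemLp (fun x => fderiv ℝ u x b) 2 μ :=
    (hu.fderiv_apply_right b).continuous.memLp_of_hasCompactSupport (huc.fderiv_apply ℝ b)
  have hlapdu : Integrable (fun x => lap u x * fderiv ℝ u x b) μ :=
    (hu.continuous_lap.mul (hu.fderiv_apply_right b).continuous).integrable_of_hasCompactSupport
      huc.lap.mul_right
  have hmono : ∫ x, (fderiv ℝ u x b ^ 2 - 2 * ε * (lap u x * fderiv ℝ u x b)) ∂μ ≤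
      ∫ x, convectionDiffusion ε b u x ^ 2 ∂μ :=
    integral_mono (hdu.integrable_sq.sub (hlapdu.const_mul _))
      (hu.continuous_convectionDiffusion.memLp_of_hasCompactSupport
        huc.convectionDiffusion).integrable_sq
      fun x => by
        rw [convectionDiffusion_apply]
        nlinarith [sq_nonneg (ε * lap u x)]
  rwa [integral_sub hdu.integrable_sq (hlapdu.const_mul _), integral_const_mul,
    integral_lap_mul_fderiv_eq_zero hu huc, mul_zero, sub_zero] at hmono

variable (ε) in
theorem integral_sq_le_of_exp_neg_inner_bounds (hu : ContDiff ℝ 2 u) (huc : HasCompactSupport u)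
    (hb : b ≠ 0) {c C : ℝ} (hc : 0 < c)
    (hbound : ∀ x ∈ tsupport u, c ≤ Real.exp (-⟪b, x⟫) ∧ Real.exp (-⟪b, x⟫) ≤ C) :
    ∫ x, u x ^ 2 ∂μ ≤
      ((Real.log C - Real.log c) / ‖b‖ ^ 2) ^ 2 * ∫ x, convectionDiffusion ε b u x ^ 2 ∂μ := by
  have hslab : ∀ x ∈ tsupport u,
      |⟪b, x⟫ - -((Real.log C + Real.log c) / 2)| ≤ (Real.log C - Real.log c) / 2 := by
    intro x hx
    have hlo := Real.log_le_log hc (hbound x hx).1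
    have hhi := Real.log_le_log (Real.exp_pos _) (hbound x hx).2
    rw [Real.log_exp] at hlo hhi
    exact abs_le.mpr ⟨by linarith, by linarith⟩
  have hpoinc := (norm_pow_four_mul_integral_sq_le_of_slab (μ := μ) (hu.of_le one_le_two) huc
    hslab).trans (mul_le_mul_of_nonneg_left
      (integral_fderiv_sq_le_integral_convectionDiffusion_sq ε b hu huc) (by positivity))
  have hb4 : 0 < ‖b‖ ^ 4 := by positivity
  rw [div_pow, ← pow_mul, div_mul_eq_mul_div, le_div_iff₀' hb4]
  linarith

end ConvectionDiffusion

theorem Real.log_sub_log_le_div_one_sub {c C ε : ℝ} (hc : 0 < c) (hcC : c ≤ C) (hε : 0 ≤ ε)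
    (hε1 : ε < 1) : Real.log C - Real.log c ≤ C / (c * (1 - ε)) := by
  have hC : 0 < C := hc.trans_le hcC
  rw [← Real.log_div hC.ne' hc.ne', ← div_div]
  calc Real.log (C / c) ≤ C / c - 1 := Real.log_le_sub_one_of_pos (by positivity)
    _ ≤ C / c := by linarith
    _ ≤ C / c / (1 - ε) := le_div_self (by positivity) (by linarith) (by linarith)

theorem sq_div_mul_sqrt_eq {c C ε β : ℝ} (hc : 0 < c) (hC : 0 < C) (hε1 : ε < 1) (hβ : 0 < β) :
    (C / (c * Real.sqrt (1 - ε) * β) * Real.sqrt (c / C + 1 / ((1 - ε) * β ^ 2))) ^ 2 =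
      C / (c * (1 - ε) * β ^ 2) + (C / (c * (1 - ε) * β ^ 2)) ^ 2 := by
  have hε' : 0 < 1 - ε := sub_pos.mpr hε1
  rw [mul_pow, div_pow, mul_pow, mul_pow, Real.sq_sqrt hε'.le, Real.sq_sqrt (by positivity)]
  field_simp

theorem a_priori_estimate_constant_velocity_general
    (d : ℕ) (ε : ℝ) (hε : 0 < ε) (hε1 : ε < 1)
    (b : EuclideanSpace ℝ (Fin d)) (hb : b ≠ 0)
    (u : EuclideanSpace ℝ (Fin d) → ℝ)
    (hu : ContDiff ℝ 2 u) (huc : HasCompactSupport u)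
    (f : EuclideanSpace ℝ (Fin d) → ℝ)
    (hf : ∀ x, f x = -ε * lap u x + ⟪b, gradient u x⟫)
    (cb Cb : ℝ) (hcb : 0 < cb) (hcbCb : cb ≤ Cb)
    (hbound : ∀ x ∈ tsupport u,
      cb ≤ Real.exp (-⟪b, x⟫) ∧ Real.exp (-⟪b, x⟫) ≤ Cb) :
    Real.sqrt (ε * (∫ x : EuclideanSpace ℝ (Fin d), ‖gradient u x‖ ^ 2)
        + ∫ x : EuclideanSpace ℝ (Fin d), (u x) ^ 2)
      ≤ Cb / (cb * Real.sqrt (1 - ε) * ‖b‖)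
          * Real.sqrt (cb / Cb + 1 / ((1 - ε) * ‖b‖ ^ 2))
          * Real.sqrt (∫ x : EuclideanSpace ℝ (Fin d), (f x) ^ 2) := by
  obtain rfl : f = convectionDiffusion ε b u := funext hf
  have hbpos : 0 < ‖b‖ := norm_pos_iff.mpr hb
  have hCb : 0 < Cb := hcb.trans_le hcbCb
  have hlog : 0 ≤ Real.log Cb - Real.log cb := sub_nonneg.mpr (Real.log_le_log hcb hcbCb)
  set m := Cb / (cb * (1 - ε) * ‖b‖ ^ 2) with hm
  have hm0 : 0 < m := by have := sub_pos.mpr hε1; positivity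
  have hL2 : ∫ x, u x ^ 2 ≤ m ^ 2 * ∫ x, convectionDiffusion ε b u x ^ 2 := by
    refine (integral_sq_le_of_exp_neg_inner_bounds ε hu huc hb hcb hbound).trans ?_
    gcongr
    rw [hm, ← div_div]
    gcongr
    exact Real.log_sub_log_le_div_one_sub hcb hcbCb hε.le hε1
  have hH1 : ε * ∫ x, ‖gradient u x‖ ^ 2 ≤ m * ∫ x, convectionDiffusion ε b u x ^ 2 := by
    rw [← integral_mul_convectionDiffusion_self ε b hu huc]
    exact integral_mul_le_of_integral_sq_le (hu.continuous.memLp_of_hasCompactSupport huc)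
      (hu.continuous_convectionDiffusion.memLp_of_hasCompactSupport huc.convectionDiffusion)
      hm0 hL2
  calc _ ≤ Real.sqrt ((m + m ^ 2) * ∫ x, convectionDiffusion ε b u x ^ 2) :=
        Real.sqrt_le_sqrt (by linarith)
    _ = _ := by
      rw [hm, ← sq_div_mul_sqrt_eq hcb hCb hε1 hbpos,
        Real.sqrt_mul (sq_nonneg _), Real.sqrt_sq (by positivity)]

theorem a_priori_estimate_constant_velocity
    (d : ℕ) (hd : 1 ≤ d) (ε : ℝ) (hε : 0 < ε) (hε1 : ε < 1)
    (b : EuclideanSpace ℝ (Fin d)) (hb : b ≠ 0)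
    (u : EuclideanSpace ℝ (Fin d) → ℝ)
    (hu : ContDiff ℝ 2 u) (huc : HasCompactSupport u)
    (f : EuclideanSpace ℝ (Fin d) → ℝ)
    (hf : ∀ x, f x = -ε * lap u x + ⟪b, gradient u x⟫)
    (cb Cb : ℝ) (hcb : 0 < cb) (hcbCb : cb ≤ Cb)
    (hbound : ∀ x ∈ tsupport u,
      cb ≤ Real.exp (-⟪b, x⟫) ∧ Real.exp (-⟪b, x⟫) ≤ Cb) :
    Real.sqrt (ε * (∫ x : EuclideanSpace ℝ (Fin d), ‖gradient u x‖ ^ 2)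
        + ∫ x : EuclideanSpace ℝ (Fin d), (u x) ^ 2)
      ≤ Cb / (cb * Real.sqrt (1 - ε) * ‖b‖)
          * Real.sqrt (cb / Cb + 1 / ((1 - ε) * ‖b‖ ^ 2))
          * Real.sqrt (∫ x : EuclideanSpace ℝ (Fin d), (f x) ^ 2) :=
  a_priori_estimate_constant_velocity_general d ε hε hε1 b hb u hu huc f hf cb Cb hcb hcbCb hbound
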